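/- (Claim 11) Let k ≥ 2 and n ≥ 3 be integers, let A ⊆ [k]^n be a compressed set, set D = A ∩ B_0, and suppose x ∈ D and y = x⁺ ∈ D, where x⁺ denotes the immediate successor of x in the ≤-order on [k]^n. Then: (1) there exists a unique index i with y_i > x_i; (2) for every index j, y_j < x_j implies y_j = 1; (3) if y_j ≠ 1 for all j, then y_j > x_i for all j, where i is the unique index from (1). -/

import Mathlib

open Finset
open scoped Classical

/-- `R_i(x)`: the set of coordinates of `x` equal to `i`.
The ambient alphabet is `[k+1] = {0,…,k}`. -/
noncomputable def rset {k N : ℕ} (x : Fin N → Fin (k + 1)) (i : ℕ) : Finset (Fin N) :=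
  Finset.univ.filter fun j => (x j : ℕ) = i

/-- the strict binary order on finite sets of coordinates:
`X <_bin Y` iff `X ≠ Y` and `max (X Δ Y) ∈ Y`. -/
def binLT {N : ℕ} (X Y : Finset (Fin N)) : Prop :=
  ∃ m ∈ Y, m ∉ X ∧ ∀ j : Fin N, ((j ∈ X ∧ j ∉ Y) ∨ (j ∈ Y ∧ j ∉ X)) → j ≤ m

/-- the strict `≤`-order on `[k+1]^N`: `x < y` iff `|R_0(x)| > |R_0(y)|`, or
`|R_0(x)| = |R_0(y)|` and for the largest `i` with `R_i(x) ≠ R_i(y)` we have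
`max (R_i(x) Δ R_i(y)) ∈ R_i(y)`. -/
def plt {k N : ℕ} (x y : Fin N → Fin (k + 1)) : Prop :=
  (rset y 0).card < (rset x 0).card ∨
    ((rset x 0).card = (rset y 0).card ∧
      ∃ i : ℕ, binLT (rset x i) (rset y i) ∧ ∀ j : ℕ, i < j → rset x j = rset y j)

/-- the `≤`-order on `[k+1]^N`. -/
def ple {k N : ℕ} (x y : Fin N → Fin (k + 1)) : Prop := x = y ∨ plt x y

/-- `B` is an initial segment of the `≤`-order. -/
def isInitSeg {k N : ℕ} (B : Finset (Fin N → Fin (k + 1))) : Prop :=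
  ∀ y ∈ B, ∀ x, ple x y → x ∈ B

/-- the `d`-shadow: all points obtained from a point of `A` by flipping one
nonzero coordinate to `0`. -/
noncomputable def dShadow {k N : ℕ} (A : Finset (Fin N → Fin (k + 1))) :
    Finset (Fin N → Fin (k + 1)) :=
  A.biUnion fun x =>
    (Finset.univ.filter fun i => x i ≠ 0).image fun i => Function.update x i 0

/-- the initial segment of the `≤`-order on `[k+1]^N` of cardinality `m`. -/
noncomputable def initSeg (k N m : ℕ) : Finset (Fin N → Fin (k + 1)) :=
  Finset.univ.filter fun x => (Finset.univ.filter fun y => ple y x).card ≤ m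

/-- the `C_s`-compression of `A ⊆ [k+1]^(n+1)`: replace each slice
`A_{s,t} = {y : t_s y ∈ A}` by the initial segment of the same size. -/
noncomputable def compress {k n : ℕ} (s : Fin (n + 1)) (A : Finset (Fin (n + 1) → Fin (k + 1))) :
    Finset (Fin (n + 1) → Fin (k + 1)) :=
  Finset.univ.biUnion fun t : Fin (k + 1) =>
    (initSeg k n
        (Finset.univ.filter fun y : Fin n → Fin (k + 1) => s.insertNth t y ∈ A).card).image
      fun y => s.insertNth t y

/-- `A` is compressed if every `C_s`-compression fixes it. -/
def IsCompressed {k n : ℕ} (A : Finset (Fin (n + 1) → Fin (k + 1))) : Prop :=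
  ∀ s : Fin (n + 1), compress s A = A

/-- `B_r`: points with exactly `r` zero coordinates. -/
noncomputable def Bexact (k N r : ℕ) : Finset (Fin N → Fin (k + 1)) :=
  Finset.univ.filter fun x => (rset x 0).card = r

/-- `B_{≥r}`: points with at least `r` zero coordinates. -/
noncomputable def Bge (k N r : ℕ) : Finset (Fin N → Fin (k + 1)) :=
  Finset.univ.filter fun x => r ≤ (rset x 0).card

/-- `m(x)`: the largest coordinate value of `x`. -/
noncomputable def mval {k N : ℕ} (x : Fin N → Fin (k + 1)) : ℕ :=
  Finset.univ.sup fun i => (x i : ℕ)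

/-- the class `C_X`: points with maximal coordinate `s`, attained exactly on `X`,
and exactly `r` zero coordinates. -/
noncomputable def classSet (k N s r : ℕ) (X : Finset (Fin N)) : Finset (Fin N → Fin (k + 1)) :=
  Finset.univ.filter fun x => mval x = s ∧ rset x s = X ∧ (rset x 0).card = r

/-- `[m]^N = {0,…,m−1}^N`. -/
noncomputable def box (k N m : ℕ) : Finset (Fin N → Fin (k + 1)) :=
  Finset.univ.filter fun x => ∀ i, (x i : ℕ) < m

/-- `{1,…,s−1}^N`. -/
noncomputable def box1 (k N s : ℕ) : Finset (Fin N → Fin (k + 1)) :=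
  Finset.univ.filter fun x => ∀ i, 1 ≤ (x i : ℕ) ∧ (x i : ℕ) ≤ s - 1

/-- `B` is a down-set. -/
def isDownSet {k N : ℕ} (B : Finset (Fin N → Fin (k + 1))) : Prop :=
  ∀ y ∈ B, ∀ x : Fin N → Fin (k + 1), (∀ j, (x j : ℕ) ≤ (y j : ℕ)) → x ∈ B

/-!
For points with equally many zero coordinates, `x < y` is decided at a single pivot
coordinate `p`: among the coordinates where `x` and `y` differ, `p` maximises `(max x_j y_j, j)`
lexicographically, and `x_p < y_p`. If `y = x⁺`, both without zeros, and `j ≠ p` is a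
coordinate with `y_j ≥ 2`, then lowering `y_j` to `1` gives a point below `y`, which therefore
must not lie above `x`; this forces `(y_p, p) ≤ (x_j, j)` lexicographically, and all three
parts follow from that inequality.
-/

section Pivot

variable {k N : ℕ}

def IsPivot (x y : Fin N → Fin (k + 1)) (p : Fin N) : Prop :=
  x p < y p ∧ ∀ j ≠ p, x j ≠ y j → toLex (max (x j) (y j), j) < toLex (y p, p)

lemma mem_rset {x : Fin N → Fin (k + 1)} {i : ℕ} {j : Fin N} :
    j ∈ rset x i ↔ (x j : ℕ) = i := by
  simp [rset]

lemma rset_zero_eq_empty_iff {x : Fin N → Fin (k + 1)} :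
    rset x 0 = ∅ ↔ ∀ j, (x j : ℕ) ≠ 0 := by
  simp [rset, filter_eq_empty_iff]

lemma exists_isPivot_of_binLT {x y : Fin N → Fin (k + 1)} {i : ℕ}
    (hi : binLT (rset x i) (rset y i)) (habove : ∀ j, i < j → rset x j = rset y j) :
    ∃ p, IsPivot x y p := by
  obtain ⟨m, hmy, hmx, hmax⟩ := hi
  rw [mem_rset] at hmy hmx
  have hle : ∀ j, x j ≠ y j → (x j : ℕ) ≤ i ∧ (y j : ℕ) ≤ i := by
    intro j hne
    have hval : ∀ (u v : Fin N → Fin (k + 1)), (∀ l, i < l → rset u l = rset v l) →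
        i < u j → u j = v j := fun u v huv h =>
      Fin.ext (mem_rset.1 (huv _ h ▸ mem_rset.2 rfl)).symm
    exact ⟨not_lt.1 fun h => hne (hval x y habove h),
      not_lt.1 fun h => hne (hval y x (fun l hl => (habove l hl).symm) h).symm⟩
  have hxm := hle m (fun h => hmx (h ▸ hmy))
  refine ⟨m, Fin.lt_def.2 (by omega), fun j hjm hne => ?_⟩
  have hxj := hle j hne
  have hjm : (j : ℕ) ≠ m := Fin.val_ne_of_ne hjm
  simp only [Prod.Lex.toLex_lt_toLex, Fin.lt_def, Fin.ext_iff, Fin.coe_max]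
  rw [Ne, Fin.ext_iff] at hne
  by_cases hij : (x j : ℕ) = i ∨ (y j : ℕ) = i
  · have : j ≤ m := hmax j (by simp only [mem_rset]; omega)
    rw [Fin.le_def] at this
    omega
  · omega

lemma binLT_of_isPivot {x y : Fin N → Fin (k + 1)} {p : Fin N} (hp : IsPivot x y p) :
    binLT (rset x (y p)) (rset y (y p)) ∧ ∀ j, (y p : ℕ) < j → rset x j = rset y j := by
  obtain ⟨hlt, hkey⟩ := hp
  have hkey' : ∀ j ≠ p, (x j : ℕ) ≠ y j →
      max (x j : ℕ) (y j) < y p ∨ max (x j : ℕ) (y j) = y p ∧ (j : ℕ) < p := by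
    intro j hjp hne
    simpa only [Prod.Lex.toLex_lt_toLex, Fin.lt_def, Fin.ext_iff, Fin.coe_max] using
      hkey j hjp (Fin.val_ne_iff.1 hne)
  rw [Fin.lt_def] at hlt
  refine ⟨⟨p, mem_rset.2 rfl, by rw [mem_rset]; omega, fun j hj => ?_⟩, fun l hl => ?_⟩
  · simp only [mem_rset] at hj
    by_cases hjp : j = p
    · exact hjp.le
    · have := hkey' j hjp (by omega)
      exact Fin.le_def.2 (by omega)
  · ext j
    simp only [mem_rset]
    by_cases hjp : j = p
    · subst hjp
      omega
    · by_cases hne : (x j : ℕ) = y j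
      · rw [hne]
      · have := hkey' j hjp hne
        omega

lemma plt_iff_exists_isPivot {x y : Fin N → Fin (k + 1)}
    (h : (rset x 0).card = (rset y 0).card) : plt x y ↔ ∃ p, IsPivot x y p := by
  constructor
  · rintro (hlt | ⟨-, i, hi, habove⟩)
    · omega
    · exact exists_isPivot_of_binLT hi habove
  · rintro ⟨p, hp⟩
    exact Or.inr ⟨h, y p, binLT_of_isPivot hp⟩

lemma IsPivot.update {x y : Fin N → Fin (k + 1)} {p j : Fin N} {v : Fin (k + 1)}
    (hp : IsPivot x y p) (hjp : j ≠ p) (hv : toLex (max (x j) v, j) < toLex (y p, p)) :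
    IsPivot x (Function.update y j v) p := by
  refine ⟨by rw [Function.update_of_ne hjp.symm]; exact hp.1, fun l hlp hne => ?_⟩
  rw [Function.update_of_ne hjp.symm]
  by_cases hlj : l = j
  · subst hlj
    rwa [Function.update_self]
  · rw [Function.update_of_ne hlj] at hne ⊢
    exact hp.2 l hlp hne

lemma isPivot_update_self {y : Fin N → Fin (k + 1)} {j : Fin N} {v : Fin (k + 1)}
    (hv : v < y j) : IsPivot (Function.update y j v) y j := by
  refine ⟨by rwa [Function.update_self], fun l hlj hne => ?_⟩
  exact absurd (Function.update_of_ne hlj v y) hne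

lemma IsPivot.not_swap {x y : Fin N → Fin (k + 1)} {p : Fin N} (hp : IsPivot x y p)
    (q : Fin N) : ¬ IsPivot y x q := by
  intro hq
  by_cases hpq : q = p
  · subst hpq
    exact lt_asymm hp.1 hq.1
  · have h1 := hp.2 q hpq (ne_of_gt hq.1)
    have h2 := hq.2 p (Ne.symm hpq) (ne_of_gt hp.1)
    rw [max_eq_left hq.1.le] at h1
    rw [max_eq_left hp.1.le] at h2
    exact lt_asymm h1 h2

lemma plt_irrefl (x : Fin N → Fin (k + 1)) : ¬ plt x x := by
  rw [plt_iff_exists_isPivot rfl]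
  rintro ⟨p, hp⟩
  exact lt_irrefl _ hp.1

lemma plt_asymm {x y : Fin N → Fin (k + 1)} (hxy : plt x y) : ¬ plt y x := by
  intro hyx
  by_cases h : (rset x 0).card = (rset y 0).card
  · obtain ⟨p, hp⟩ := (plt_iff_exists_isPivot h).1 hxy
    obtain ⟨q, hq⟩ := (plt_iff_exists_isPivot h.symm).1 hyx
    exact hp.not_swap q hq
  · rcases hxy with hlt | ⟨heq, -⟩ <;> rcases hyx with hlt' | ⟨heq', -⟩ <;> omega

end Pivot

section Successor

variable {k N : ℕ} {x y : Fin N → Fin (k + 1)} {p : Fin N}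

def IsSucc (x y : Fin N → Fin (k + 1)) : Prop :=
  plt x y ∧ ∀ z, plt x z → ple y z

lemma IsSucc.not_plt_of_plt {z : Fin N → Fin (k + 1)} (h : IsSucc x y) (hxz : plt x z) :
    ¬ plt z y := by
  rcases h.2 z hxz with hyz | hyz
  · exact hyz ▸ plt_irrefl y
  · exact plt_asymm hyz

lemma IsSucc.toLex_le_of_one_lt (h : IsSucc x y) (hx : ∀ j, (x j : ℕ) ≠ 0)
    (hy : ∀ j, (y j : ℕ) ≠ 0) (hp : IsPivot x y p) {j : Fin N} (hjp : j ≠ p)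
    (hyj : 1 < (y j : ℕ)) : toLex (y p, p) ≤ toLex (x j, j) := by
  by_contra! hlt
  set one : Fin (k + 1) := ⟨1, by have := (y j).isLt; omega⟩
  set z := Function.update y j one
  have hz : ∀ l, (z l : ℕ) ≠ 0 := by
    intro l
    by_cases hlj : l = j
    · simp [z, hlj, one]
    · simpa [z, Function.update_of_ne hlj] using hy l
  have hxz : plt x z := by
    rw [plt_iff_exists_isPivot (by rw [rset_zero_eq_empty_iff.2 hx, rset_zero_eq_empty_iff.2 hz])]
    refine ⟨p, hp.update hjp ?_⟩
    rwa [max_eq_left (Fin.le_def.2 (by have := hx j; simp only [one]; omega))]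
  have hzy : plt z y := by
    rw [plt_iff_exists_isPivot (by rw [rset_zero_eq_empty_iff.2 hz, rset_zero_eq_empty_iff.2 hy])]
    exact ⟨j, isPivot_update_self (Fin.lt_def.2 hyj)⟩
  exact h.not_plt_of_plt hxz hzy

section Parts

variable (h : IsSucc x y) (hx : ∀ j, (x j : ℕ) ≠ 0) (hy : ∀ j, (y j : ℕ) ≠ 0)
  (hp : IsPivot x y p)
include h hx hy hp

lemma IsSucc.eq_pivot_of_lt {i : Fin N} (hi : (x i : ℕ) < y i) : i = p := by
  by_contra hip
  have hle := h.toLex_le_of_one_lt hx hy hp hip (by have := hx i; omega)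
  have hlt := hp.2 i hip (Fin.ne_of_lt (Fin.lt_def.2 hi))
  rw [max_eq_right (Fin.le_def.2 hi.le)] at hlt
  have := lt_of_lt_of_le hlt hle
  simp only [Prod.Lex.toLex_lt_toLex, Fin.lt_def, Fin.ext_iff] at this
  omega

lemma IsSucc.eq_one_of_lt {j : Fin N} (hj : (y j : ℕ) < x j) : (y j : ℕ) = 1 := by
  by_contra hj1
  have hjp : j ≠ p := by
    rintro rfl
    exact absurd (Fin.lt_def.1 hp.1) (by omega)
  have hle := h.toLex_le_of_one_lt hx hy hp hjp (by have := hy j; omega)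
  have hlt := hp.2 j hjp (Fin.ne_of_gt (Fin.lt_def.2 hj))
  rw [max_eq_left (Fin.le_def.2 hj.le)] at hlt
  exact not_le.2 hlt hle

lemma IsSucc.pivot_lt_of_ne_one (hy1 : ∀ j, (y j : ℕ) ≠ 1) (j : Fin N) :
    (x p : ℕ) < y j := by
  by_contra! hyx
  have hxyp := Fin.lt_def.1 hp.1
  have hjp : j ≠ p := by
    rintro rfl
    omega
  have hle := h.toLex_le_of_one_lt hx hy hp hjp (by have := hy j; have := hy1 j; omega)
  have hxj : (x j : ℕ) ≤ y j := not_lt.1 fun hj => hy1 j (h.eq_one_of_lt hx hy hp hj)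
  simp only [Prod.Lex.toLex_le_toLex, Fin.lt_def, Fin.ext_iff] at hle
  omega

end Parts

end Successor

theorem claim11_general (k n : ℕ)
    (A : Finset (Fin (n + 1) → Fin (k + 1)))
    (x y : Fin (n + 1) → Fin (k + 1))
    (hx : x ∈ A ∩ Bexact k (n + 1) 0) (hy : y ∈ A ∩ Bexact k (n + 1) 0)
    (hsucc : plt x y ∧ ∀ z : Fin (n + 1) → Fin (k + 1), plt x z → ple y z) :
    (∃! i : Fin (n + 1), (x i : ℕ) < (y i : ℕ)) ∧
    (∀ j : Fin (n + 1), (y j : ℕ) < (x j : ℕ) → (y j : ℕ) = 1) ∧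
    ((∀ j : Fin (n + 1), (y j : ℕ) ≠ 1) →
      ∀ i : Fin (n + 1), (x i : ℕ) < (y i : ℕ) →
        ∀ j : Fin (n + 1), (x i : ℕ) < (y j : ℕ)) := by
  have hxy : IsSucc x y := hsucc
  have hx0 : rset x 0 = ∅ := card_eq_zero.1 (mem_filter.1 (mem_inter.1 hx).2).2
  have hy0 : rset y 0 = ∅ := card_eq_zero.1 (mem_filter.1 (mem_inter.1 hy).2).2
  obtain ⟨p, hp⟩ := (plt_iff_exists_isPivot (by rw [hx0, hy0])).1 hxy.1
  rw [rset_zero_eq_empty_iff] at hx0 hy0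
  have huniq : ∀ i, (x i : ℕ) < y i → i = p := fun i => hxy.eq_pivot_of_lt hx0 hy0 hp
  refine ⟨⟨p, Fin.lt_def.1 hp.1, huniq⟩, fun j => hxy.eq_one_of_lt hx0 hy0 hp, ?_⟩
  intro hy1 i hi
  rw [huniq i hi]
  exact hxy.pivot_lt_of_ne_one hx0 hy0 hp hy1

/-- **Claim 11.** Let `k ≥ 2`, `n ≥ 3`, let `A ⊆ [k]^n` be compressed, `D = A ∩ B_0`,
and suppose `x ∈ D` and `y = x⁺ ∈ D` (the immediate successor in the `≤`-order). Then
(1) there is a unique `i` with `y_i > x_i`; (2) `y_j < x_j` implies `y_j = 1`;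
(3) if `y_j ≠ 1` for all `j`, then `y_j > x_i` for all `j`, where `i` is the unique
index from (1). (Dimension `n ≥ 3` is rendered as `n + 1` with `n ≥ 2`;
alphabet `[k]` with `k ≥ 2` as `Fin (k+1)` with `k ≥ 1`.) -/
theorem claim11 (k n : ℕ) (hk : 1 ≤ k) (hn : 2 ≤ n)
    (A : Finset (Fin (n + 1) → Fin (k + 1))) (hA : IsCompressed A)
    (x y : Fin (n + 1) → Fin (k + 1))
    (hx : x ∈ A ∩ Bexact k (n + 1) 0) (hy : y ∈ A ∩ Bexact k (n + 1) 0)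
    (hsucc : plt x y ∧ ∀ z : Fin (n + 1) → Fin (k + 1), plt x z → ple y z) :
    (∃! i : Fin (n + 1), (x i : ℕ) < (y i : ℕ)) ∧
    (∀ j : Fin (n + 1), (y j : ℕ) < (x j : ℕ) → (y j : ℕ) = 1) ∧
    ((∀ j : Fin (n + 1), (y j : ℕ) ≠ 1) →
      ∀ i : Fin (n + 1), (x i : ℕ) < (y i : ℕ) →
        ∀ j : Fin (n + 1), (x i : ℕ) < (y j : ℕ)) :=
  claim11_general k n A x y hx hy hsucc
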